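/- arXiv:1905.03830 — 2 statements merged into one kernel-verified Lean document; each statement's English description precedes it below -/
import Mathlib

section
/- If the partially ordered set K is upward directed, then for every loop p̄ based at a ∈ K we have p̄ ~ i_a; equivalently, the loop group G_a is trivial. -/
namespace PosetNets

/-- A composable sequence of elementary paths on a partially ordered set `K`,
from a starting point to an ending point.  `up h p` appends an ascending
elementary step `(c,b)̄` (with `b ≤ c`) to `p`, and `down h p` appends a
descending elementary step `(c,b)` (with `c ≤ b`). -/
inductive Path (K : Type) [PartialOrder K] : K → K → Type
  | nil (a : K) : Path K a a
  | up {a b c : K} (h : b ≤ c) (p : Path K a b) : Path K a c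
  | down {a b c : K} (h : c ≤ b) (p : Path K a b) : Path K a c

namespace Path

variable {K : Type} [PartialOrder K]

/-- Concatenation of composable sequences of elementary paths. -/
def comp : ∀ {a b c : K}, Path K b c → Path K a b → Path K a c
  | _, _, _, .nil _, q => q
  | _, _, _, .up h p, q => .up h (p.comp q)
  | _, _, _, .down h p, q => .down h (p.comp q)

/-- The ascending elementary path `(b,a)̄` (for `a ≤ b`), from `a` to `b`. -/
def sUp {a b : K} (h : a ≤ b) : Path K a b := .up h (.nil a)

/-- The descending elementary path `(b,a)` (for `b ≤ a`), from `a` to `b`. -/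
def sDown {a b : K} (h : b ≤ a) : Path K a b := .down h (.nil a)

/-- The reverse sequence `p̄⁻¹ = s₁⁻¹ * ⋯ * sₙ⁻¹` of a sequence
`p̄ = sₙ * ⋯ * s₁` of elementary paths. -/
def reverse : ∀ {a b : K}, Path K a b → Path K b a
  | _, _, .nil a => .nil a
  | _, _, .up h p => p.reverse.comp (sDown h)
  | _, _, .down h p => p.reverse.comp (sUp h)

end Path

/-- The equivalence relation on sequences of elementary paths generated by the
four relations `(a,b)*(b,c) ~ (a,c)`, `(c,b)̄*(b,a)̄ ~ (c,a)̄`,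
`(a,b)*(b,a)̄ ~ i_a`, `(b,a)̄*(a,b) ~ i_b` (for `a ≤ b ≤ c`), applied at any
position of a sequence. -/
inductive PathEquiv {K : Type} [PartialOrder K] : ∀ {a b : K}, Path K a b → Path K a b → Prop
  | refl {a b : K} (p : Path K a b) : PathEquiv p p
  | symm {a b : K} {p q : Path K a b} : PathEquiv p q → PathEquiv q p
  | trans {a b : K} {p q r : Path K a b} : PathEquiv p q → PathEquiv q r → PathEquiv p r
  | comp_congr {a b c : K} {p p' : Path K b c} {q q' : Path K a b} :
      PathEquiv p p' → PathEquiv q q' → PathEquiv (p.comp q) (p'.comp q')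
  | down_down {a b c : K} (h1 : a ≤ b) (h2 : b ≤ c) :
      PathEquiv ((Path.sDown h1).comp (Path.sDown h2)) (Path.sDown (h1.trans h2))
  | up_up {a b c : K} (h1 : a ≤ b) (h2 : b ≤ c) :
      PathEquiv ((Path.sUp h2).comp (Path.sUp h1)) (Path.sUp (h1.trans h2))
  | down_up {a b : K} (h : a ≤ b) :
      PathEquiv ((Path.sDown h).comp (Path.sUp h)) (Path.nil a)
  | up_down {a b : K} (h : a ≤ b) :
      PathEquiv ((Path.sUp h).comp (Path.sDown h)) (Path.nil b)

/-- The set of equivalence classes of loops based at `a`. -/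
def LoopCl (K : Type) [PartialOrder K] (a : K) := Quot (@PathEquiv K _ a a)

end PosetNets

namespace PosetNets

theorem Path.comp_nil {K : Type} [PartialOrder K] :
    ∀ {a b : K} (p : Path K a b), p.comp (.nil a) = p
  | _, _, .nil a => by simp [Path.comp]
  | _, _, .up h p => by simp [Path.comp, Path.comp_nil p]
  | _, _, .down h p => by simp [Path.comp, Path.comp_nil p]

theorem Path.comp_assoc {K : Type} [PartialOrder K] :
    ∀ {a b c d : K} (p : Path K c d) (q : Path K b c) (r : Path K a b),
      (p.comp q).comp r = p.comp (q.comp r)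
  | _, _, _, _, .nil _, _, _ => by simp [Path.comp]
  | _, _, _, _, .up h p, q, r => by simp [Path.comp, Path.comp_assoc p q r]
  | _, _, _, _, .down h p, q, r => by simp [Path.comp, Path.comp_assoc p q r]

theorem hat_form {K : Type} [PartialOrder K]
    (hdir : ∀ x y : K, ∃ z : K, x ≤ z ∧ y ≤ z) :
    ∀ {a b : K} (p : Path K a b), ∃ z : K, ∃ h1 : a ≤ z, ∃ h2 : b ≤ z,
      PathEquiv p ((Path.sDown h2).comp (Path.sUp h1)) := by
  intro a b p
  induction p with
  | nil =>
      exact ⟨a, le_refl a, le_refl a, .symm (PathEquiv.down_up (le_refl a))⟩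
  | @up b c h p ih =>
      obtain ⟨z, h1, h2, hp⟩ := ih
      obtain ⟨w, hc, hz⟩ := hdir c z
      refine ⟨w, h1.trans hz, hc, ?_⟩
      have e1 : Path.up h p = (Path.sUp h).comp p := by simp [Path.comp, Path.sUp]
      rw [e1]
      refine PathEquiv.trans (PathEquiv.comp_congr (.refl _) hp) ?_
      -- now: sUp h ∘ (sDown h2 ∘ sUp h1) ~ sDown hc ∘ sUp (h1.trans hz)
      have step1 : PathEquiv (Path.sUp h)
          ((Path.sDown hc).comp (Path.sUp (h2.trans hz))) := by
        have e0 : Path.sUp h = (Path.nil c).comp (Path.sUp h) := by simp [Path.comp]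
        rw [e0]
        refine PathEquiv.trans
          (PathEquiv.comp_congr (PathEquiv.symm (PathEquiv.down_up hc)) (.refl _)) ?_
        rw [Path.comp_assoc]
        have e2 : Path.sUp (h.trans hc) = Path.sUp (h2.trans hz) := rfl
        exact PathEquiv.comp_congr (.refl _)
          (e2 ▸ PathEquiv.up_up h hc)
      have step2 : PathEquiv ((Path.sUp (h2.trans hz)).comp (Path.sDown h2))
          (Path.sUp hz) := by
        refine PathEquiv.trans
          (PathEquiv.comp_congr (PathEquiv.symm (PathEquiv.up_up h2 hz)) (.refl _)) ?_
        rw [Path.comp_assoc]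
        refine PathEquiv.trans
          (PathEquiv.comp_congr (.refl _) (PathEquiv.up_down h2)) ?_
        rw [Path.comp_nil]
        exact .refl _
      refine PathEquiv.trans (PathEquiv.comp_congr step1 (.refl _)) ?_
      rw [Path.comp_assoc, ← Path.comp_assoc (Path.sUp (h2.trans hz))]
      refine PathEquiv.comp_congr (.refl _) ?_
      refine PathEquiv.trans (PathEquiv.comp_congr step2 (.refl _)) ?_
      exact PathEquiv.up_up h1 hz
  | @down b c h p ih =>
      obtain ⟨z, h1, h2, hp⟩ := ih
      refine ⟨z, h1, h.trans h2, ?_⟩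
      have e1 : Path.down h p = (Path.sDown h).comp p := by simp [Path.comp, Path.sDown]
      rw [e1]
      refine PathEquiv.trans (PathEquiv.comp_congr (.refl _) hp) ?_
      rw [← Path.comp_assoc]
      exact PathEquiv.comp_congr (PathEquiv.down_down h h2) (.refl _)

/-- If the partially ordered set `K` is upward directed, then every
loop `p̄` based at `a ∈ K` is equivalent to the trivial path `i_a`; equivalently,
the loop group `G_a` is trivial. -/
theorem loop_equiv_trivial_of_directed {K : Type} [PartialOrder K]
    (hdir : ∀ x y : K, ∃ z : K, x ≤ z ∧ y ≤ z) (a : K) :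
    (∀ p : Path K a a, PathEquiv p (Path.nil a)) ∧
      (∀ x : LoopCl K a, x = Quot.mk _ (Path.nil a)) := by
  have key : ∀ p : Path K a a, PathEquiv p (Path.nil a) := by
    intro p
    obtain ⟨z, h1, h2, hp⟩ := hat_form hdir p
    exact hp.trans (PathEquiv.down_up h1)
  refine ⟨key, fun x => ?_⟩
  induction x using Quot.ind with
  | _ p => exact Quot.sound (key p)

end PosetNets
end

section
/- Given a net of Hilbert spaces over K and a ≤ b, the operator χ_a^b satisfies (χ_a^b)* χ_a^b = projection of H onto H_a ⊗ ℓ²(S_a), and χ_a^b (χ_a^b)* is a projection whose range is contained in H_b ⊗ ℓ²(S_b). -/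
namespace PosetNets

open scoped Classical

/-- A net of Hilbert spaces over the partially ordered set `K`: a family of complex
Hilbert spaces `H a` together with isometric embeddings `γ hab : H a → H b` for
`a ≤ b`, compatible with composition. -/
structure HilbertNet (K : Type) [PartialOrder K] where
  H : K → Type
  [normed : ∀ a : K, NormedAddCommGroup (H a)]
  [ips : ∀ a : K, InnerProductSpace ℂ (H a)]
  [cs : ∀ a : K, CompleteSpace (H a)]
  γ : ∀ {a b : K}, a ≤ b → (H a →ₗᵢ[ℂ] H b)
  γ_id : ∀ (a : K) (v : H a), γ (le_refl a) v = v
  γ_comp : ∀ {a b c : K} (hab : a ≤ b) (hbc : b ≤ c) (v : H a),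
      γ hbc (γ hab v) = γ (hab.trans hbc) v

attribute [instance] HilbertNet.normed HilbertNet.ips HilbertNet.cs

/-- Equality of starting point together with path equivalence, for paths ending at `a`. -/
inductive SPathRel (K : Type) [PartialOrder K] (a : K) :
    (Σ x : K, Path K x a) → (Σ x : K, Path K x a) → Prop
  | mk {x : K} {p q : Path K x a} : PathEquiv p q → SPathRel K a ⟨x, p⟩ ⟨x, q⟩

/-- `S_a`: the set of (equivalence classes of) paths on `K` with ending point `a`. -/
def PCl (K : Type) [PartialOrder K] (a : K) := Quot (SPathRel K a)

/-- The index set `⨆_{a ∈ K} S_a` for the orthonormal basis of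
`H = ⊕_{a∈K} (H_a ⊗ ℓ²(S_a))`. -/
def PIdx (K : Type) [PartialOrder K] := Σ a : K, PCl K a

/-- The Hilbert space `H = ⊕_{a∈K} (H_a ⊗ ℓ²(S_a))`, realized as the ℓ²-direct sum of
copies of `H_a` indexed by the paths ending at `a`, for all `a ∈ K`.  The elementary
tensor `h ⊗ e_p` (for `h ∈ H_a`, `p ∈ S_a`) corresponds to `lp.single 2 ⟨a, p⟩ h`. -/
noncomputable abbrev BigH {K : Type} [PartialOrder K] (N : HilbertNet K) :=
  lp (fun i : PIdx K => N.H i.1) 2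

/-- The map `S_a → S_b`, `p ↦ [(b,a)̄ * p̄]`, for `a ≤ b`. -/
def shiftCl {K : Type} [PartialOrder K] {a b : K} (hab : a ≤ b) : PCl K a → PCl K b :=
  Quot.lift (fun s => Quot.mk _ ⟨s.1, (Path.sUp hab).comp s.2⟩)
    (by
      rintro ⟨x, p⟩ ⟨y, q⟩ h
      cases h with
      | mk h => exact Quot.sound (SPathRel.mk (PathEquiv.comp_congr (PathEquiv.refl _) h)))

/-- The operator `χ_{p̄}` on `H` associated to a sequence `p̄` of elementary paths:
the composition, along the steps of `p̄`, of the operators `χ_a^b` (ascending steps)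
and their adjoints `(χ_a^b)*` (descending steps); the empty sequence `i_a` yields
`χ_a^a` (the projection onto the component `H_a ⊗ ℓ²(S_a)`). -/
noncomputable def chi {K : Type} [PartialOrder K] (N : HilbertNet K)
    (X : ∀ (a b : K), a ≤ b → (BigH N →L[ℂ] BigH N)) :
    ∀ {a b : K}, Path K a b → (BigH N →L[ℂ] BigH N)
  | _, _, .nil a => X a a (le_refl a)
  | _, _, .up (b := b) (c := c) h p => X b c h ∘L chi N X p
  | _, _, .down (b := b) (c := c) h p =>
      (ContinuousLinearMap.adjoint (X c b h)) ∘L chi N X p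

/-- The defining action of the partial isometries `χ_a^b` on the basis vectors
`h ⊗ e_p` with `h ∈ H_a`, `p ∈ S_a`:  `χ_a^b (h ⊗ e_p) = γ_{ba}(h) ⊗ e_{[(b,a)̄ * p̄]}`. -/
def ChiOnBasis {K : Type} [PartialOrder K] (N : HilbertNet K)
    (X : ∀ (a b : K), a ≤ b → (BigH N →L[ℂ] BigH N)) : Prop :=
  ∀ (a b : K) (hab : a ≤ b) (q : PCl K a) (h : N.H a),
    X a b hab (lp.single 2 (⟨a, q⟩ : PIdx K) h) =
      lp.single 2 (⟨b, shiftCl hab q⟩ : PIdx K) (N.γ hab h)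

/-- `χ_a^b` vanishes on the components `H_c ⊗ ℓ²(S_c)` with `c ≠ a`. -/
def ChiVanishes {K : Type} [PartialOrder K] (N : HilbertNet K)
    (X : ∀ (a b : K), a ≤ b → (BigH N →L[ℂ] BigH N)) : Prop :=
  ∀ (a b : K) (hab : a ≤ b) (i : PIdx K) (h : N.H i.1),
    i.1 ≠ a → X a b hab (lp.single 2 i h) = 0


section Aux

variable {K : Type} [PartialOrder K]

/-- The map `S_b → S_a`, `q ↦ [(a,b) * q̄]`, for `a ≤ b`. -/
def unshiftCl {a b : K} (hab : a ≤ b) : PCl K b → PCl K a :=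
  Quot.lift (fun s => Quot.mk _ ⟨s.1, (Path.sDown hab).comp s.2⟩)
    (by
      rintro ⟨x, p⟩ ⟨y, q⟩ h
      cases h with
      | mk h => exact Quot.sound (SPathRel.mk (PathEquiv.comp_congr (PathEquiv.refl _) h)))

lemma unshiftCl_shiftCl {a b : K} (hab : a ≤ b) (q : PCl K a) :
    unshiftCl hab (shiftCl hab q) = q := by
  refine Quot.inductionOn q ?_
  rintro ⟨x, p⟩
  refine Quot.sound (SPathRel.mk ?_)
  show PathEquiv ((Path.sDown hab).comp ((Path.sUp hab).comp p)) p
  have h1 : (Path.sDown hab).comp ((Path.sUp hab).comp p) =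
      ((Path.sDown hab).comp (Path.sUp hab)).comp p := by
    simp [Path.comp, Path.sDown, Path.sUp]
  have h2 : (Path.nil a).comp p = p := by simp [Path.comp]
  have h3 : PathEquiv (((Path.sDown hab).comp (Path.sUp hab)).comp p) ((Path.nil a).comp p) :=
    PathEquiv.comp_congr (PathEquiv.down_up hab) (PathEquiv.refl p)
  rw [h2] at h3
  rw [h1]
  exact h3

lemma shiftCl_injective {a b : K} (hab : a ≤ b) :
    Function.Injective (shiftCl (K := K) hab) := by
  intro q r h
  rw [← unshiftCl_shiftCl hab q, h, unshiftCl_shiftCl hab r]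

lemma lp_single_zero {ι : Type*} [DecidableEq ι] (E : ι → Type*)
    [∀ i, NormedAddCommGroup (E i)] (p : ENNReal) (i : ι) :
    lp.single p i (0 : E i) = (0 : lp E p) := by
  refine lp.ext (funext fun j => ?_)
  by_cases h : j = i
  · subst h; simp [lp.single_apply_self]
  · simp [lp.single_apply_ne p i _ h]

/-- Two continuous linear maps out of `BigH N` agreeing on all `lp.single`
elements are equal. -/
lemma clm_ext_single {N : HilbertNet K} {F : Type*} [NormedAddCommGroup F]
    [NormedSpace ℂ F] (A B : BigH N →L[ℂ] F)
    (h : ∀ (i : PIdx K) (v : N.H i.1), A (lp.single 2 i v) = B (lp.single 2 i v)) :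
    A = B := by
  ext f
  have hs : HasSum (fun i : PIdx K => lp.single 2 i (f i)) f :=
    lp.hasSum_single ENNReal.ofNat_ne_top f
  have hA : HasSum (fun i : PIdx K => A (lp.single 2 i (f i))) (A f) := hs.mapL A
  have hB : HasSum (fun i : PIdx K => B (lp.single 2 i (f i))) (B f) := hs.mapL B
  have he : (fun i : PIdx K => A (lp.single 2 i (f i))) =
      fun i : PIdx K => B (lp.single 2 i (f i)) := funext fun i => h i (f i)
  exact hA.unique (he ▸ hB)

/-- `lp.single` does not depend on the choice of `DecidableEq` instance. -/
lemma single_inst_eq₂ {ι : Type} (E : ι → Type) [∀ i, NormedAddCommGroup (E i)]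
    (inst1 inst2 : DecidableEq ι) (p : ENNReal) (i : ι) (v : E i) :
    @lp.single ι E _ inst1 p i v = @lp.single ι E _ inst2 p i v := by
  have h : inst1 = inst2 := by
    funext x y
    exact Subsingleton.elim _ _
  rw [h]

end Aux

set_option maxHeartbeats 4000000 in
open ContinuousLinearMap in
/-- For a net of Hilbert spaces over `K` and `a ≤ b`, the operator
`(χ_a^b)* χ_a^b` is the orthogonal projection of `H` onto the component
`H_a ⊗ ℓ²(S_a)` (it fixes vectors supported in that component and kills vectors
supported outside of it), while `χ_a^b (χ_a^b)*` is an orthogonal projection whose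
range is contained in `H_b ⊗ ℓ²(S_b)`. -/
theorem chi_star_chi_is_projection {K : Type} [PartialOrder K] (N : HilbertNet K)
    (X : ∀ (a b : K), a ≤ b → (BigH N →L[ℂ] BigH N))
    (hX : ChiOnBasis N X) (hX0 : ChiVanishes N X)
    {a b : K} (hab : a ≤ b) :
    (∀ f : BigH N, (∀ i : PIdx K, i.1 ≠ a → f i = 0) →
        (adjoint (X a b hab) ∘L X a b hab) f = f) ∧
    (∀ f : BigH N, (∀ i : PIdx K, i.1 = a → f i = 0) →
        (adjoint (X a b hab) ∘L X a b hab) f = 0) ∧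
    IsSelfAdjoint (X a b hab ∘L adjoint (X a b hab)) ∧
    IsIdempotentElem (X a b hab ∘L adjoint (X a b hab)) ∧
    (∀ (f : BigH N) (i : PIdx K), i.1 ≠ b → (X a b hab ∘L adjoint (X a b hab)) f i = 0) := by
  classical
  letI instC : DecidableEq ((a : K) × PCl K a) := fun x y => Classical.propDecidable _
  have norm : ∀ (inst1 : DecidableEq (PIdx K)) (i : PIdx K) (v : N.H i.1),
      @lp.single (PIdx K) (fun j : PIdx K => N.H j.1) (fun j => N.normed j.1) inst1 2 i v =
        @lp.single (PIdx K) (fun j : PIdx K => N.H j.1) (fun j => N.normed j.1) instC 2 i v :=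
    fun inst1 i v => @single_inst_eq₂ (PIdx K) (fun j : PIdx K => N.H j.1)
      (fun j => N.normed j.1) inst1 instC 2 i v
  set T := X a b hab with hTdef
  have hTs : ∀ (q : PCl K a) (h : N.H a),
      T (@lp.single (PIdx K) (fun j : PIdx K => N.H j.1) (fun j => N.normed j.1) instC 2
          ⟨a, q⟩ h) =
        @lp.single (PIdx K) (fun j : PIdx K => N.H j.1) (fun j => N.normed j.1) instC 2
          ⟨b, shiftCl hab q⟩ (N.γ hab h) := by
    intro q h
    have h0 := hX a b hab q h
    exact h0.trans (norm _ _ _)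
  have hT0 : ∀ (i : PIdx K) (h : N.H i.1), i.1 ≠ a →
      T (@lp.single (PIdx K) (fun j : PIdx K => N.H j.1) (fun j => N.normed j.1) instC 2
          i h) = 0 := by
    intro i h hi
    have h0 := hX0 a b hab i h hi
    simp only [norm] at h0
    exact h0
  -- `(χ_a^b)*` maps the basis vector `γ_{ba}(h) ⊗ e_{[(b,a)̄ * q̄]}` back to `h ⊗ e_q`.
  have K1 : ∀ (q : PCl K a) (h : N.H a),
      adjoint T (@lp.single (PIdx K) (fun j : PIdx K => N.H j.1) (fun j => N.normed j.1) instC 2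
          ⟨b, shiftCl hab q⟩ (N.γ hab h)) =
        @lp.single (PIdx K) (fun j : PIdx K => N.H j.1) (fun j => N.normed j.1) instC 2
          ⟨a, q⟩ h := by
    intro q h
    apply ext_inner_right ℂ
    intro z
    rw [adjoint_inner_left]
    have hc : ∀ (j : PIdx K) (v : N.H j.1),
        ((innerSL ℂ (@lp.single (PIdx K) (fun j : PIdx K => N.H j.1)
              (fun j => N.normed j.1) instC 2 ⟨b, shiftCl hab q⟩ (N.γ hab h))).comp T)
            (@lp.single (PIdx K) (fun j : PIdx K => N.H j.1)
              (fun j => N.normed j.1) instC 2 j v) =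
          (innerSL ℂ (@lp.single (PIdx K) (fun j : PIdx K => N.H j.1)
              (fun j => N.normed j.1) instC 2 ⟨a, q⟩ h))
            (@lp.single (PIdx K) (fun j : PIdx K => N.H j.1)
              (fun j => N.normed j.1) instC 2 j v) := by
      intro j v
      simp only [ContinuousLinearMap.comp_apply, innerSL_apply_apply]
      by_cases hj : j.1 = a
      · obtain ⟨c, r⟩ := j
        dsimp only at hj v ⊢
        subst hj
        rw [hTs r v]; erw [lp.inner_single_right, lp.inner_single_right]
        by_cases hr : r = q
        · subst hr
          erw [lp.single_apply_self, lp.single_apply_self]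
          exact (N.γ hab).inner_map_map h v
        · erw [lp.single_apply_ne 2 _ _
              (fun H => hr (shiftCl_injective hab (sigma_mk_injective H))),
            lp.single_apply_ne 2 _ _ (fun H => hr (sigma_mk_injective H)),
            inner_zero_left, inner_zero_left]
      · rw [hT0 j v hj, inner_zero_right]; erw [lp.inner_single_right]; erw [
          lp.single_apply_ne (E := fun j : PIdx K => N.H j.1) 2 (⟨a, q⟩ : PIdx K) h (j := j) (fun H => hj (congrArg Sigma.fst H)),
          inner_zero_left]
    have hAB := clm_ext_single
      ((innerSL ℂ (@lp.single (PIdx K) (fun j : PIdx K => N.H j.1)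
          (fun j => N.normed j.1) instC 2 ⟨b, shiftCl hab q⟩ (N.γ hab h))).comp T)
      (innerSL ℂ (@lp.single (PIdx K) (fun j : PIdx K => N.H j.1)
          (fun j => N.normed j.1) instC 2 ⟨a, q⟩ h))
      (by intro i v; have := hc i v; simp only [norm]; exact this)
    have := DFunLike.congr_fun hAB z
    simpa using this
  have hTTa : ∀ (q : PCl K a) (h : N.H a),
      adjoint T (T (@lp.single (PIdx K) (fun j : PIdx K => N.H j.1)
          (fun j => N.normed j.1) instC 2 ⟨a, q⟩ h)) =
        @lp.single (PIdx K) (fun j : PIdx K => N.H j.1)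
          (fun j => N.normed j.1) instC 2 ⟨a, q⟩ h := fun q h => by
    rw [hTs q h]; exact K1 q h
  have hTTn : ∀ (i : PIdx K) (h : N.H i.1), i.1 ≠ a →
      adjoint T (T (@lp.single (PIdx K) (fun j : PIdx K => N.H j.1)
          (fun j => N.normed j.1) instC 2 i h)) = 0 := fun i h hi => by
    rw [hT0 i h hi, map_zero]
  -- `(χ_a^b)*` kills basis vectors outside the component `H_b ⊗ ℓ²(S_b)`.
  have K3 : ∀ (i : PIdx K) (k : N.H i.1), i.1 ≠ b →
      adjoint T (@lp.single (PIdx K) (fun j : PIdx K => N.H j.1)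
          (fun j => N.normed j.1) instC 2 i k) = 0 := by
    intro i k hi
    apply ext_inner_right ℂ
    intro z
    rw [adjoint_inner_left, inner_zero_left]
    have hc : ∀ (j : PIdx K) (v : N.H j.1),
        ((innerSL ℂ (@lp.single (PIdx K) (fun j : PIdx K => N.H j.1)
              (fun j => N.normed j.1) instC 2 i k)).comp T)
            (@lp.single (PIdx K) (fun j : PIdx K => N.H j.1)
              (fun j => N.normed j.1) instC 2 j v) =
          (0 : BigH N →L[ℂ] ℂ)
            (@lp.single (PIdx K) (fun j : PIdx K => N.H j.1)
              (fun j => N.normed j.1) instC 2 j v) := by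
      intro j v
      simp only [ContinuousLinearMap.comp_apply, innerSL_apply_apply,
        ContinuousLinearMap.zero_apply]
      by_cases hj : j.1 = a
      · obtain ⟨c, r⟩ := j
        dsimp only at hj v ⊢
        subst hj
        rw [hTs r v]; erw [lp.inner_single_right]; erw [
          lp.single_apply_ne (E := fun j : PIdx K => N.H j.1) 2 i k (j := (⟨b, shiftCl hab r⟩ : PIdx K)) (fun H => hi (congrArg Sigma.fst H).symm),
          inner_zero_left]
      · rw [hT0 j v hj, inner_zero_right]
    have hAB := clm_ext_single
      ((innerSL ℂ (@lp.single (PIdx K) (fun j : PIdx K => N.H j.1)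
          (fun j => N.normed j.1) instC 2 i k)).comp T)
      (0 : BigH N →L[ℂ] ℂ)
      (by intro j v; have := hc j v; simp only [norm]; exact this)
    have := DFunLike.congr_fun hAB z
    simpa using this
  have hmid : T ∘L (adjoint T ∘L T) = T := by
    refine clm_ext_single _ _ ?_
    intro i v
    simp only [ContinuousLinearMap.comp_apply, norm]
    by_cases hi : i.1 = a
    · obtain ⟨c, q⟩ := i
      dsimp only at hi v ⊢
      subst hi
      rw [hTTa q v]
    · rw [hTTn i v hi, map_zero, hT0 i v hi]
  refine ⟨?_, ?_, ?_, ?_, ?_⟩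
  · -- `(χ_a^b)* χ_a^b` fixes vectors supported in `H_a ⊗ ℓ²(S_a)`
    intro f hf
    have hs : HasSum (fun i : PIdx K => lp.single 2 i (f i)) f :=
      lp.hasSum_single ENNReal.ofNat_ne_top f
    have h1 := hs.mapL (adjoint T ∘L T)
    have h2 : (fun i : PIdx K => (adjoint T ∘L T) (lp.single 2 i (f i))) =
        fun i : PIdx K => lp.single 2 i (f i) := by
      funext i
      by_cases hi : i.1 = a
      · obtain ⟨c, q⟩ := i
        dsimp only at hi ⊢
        subst hi
        have := hTTa q (f ⟨c, q⟩)
        simp only [norm, ContinuousLinearMap.comp_apply]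
        exact this
      · have h0 := hf i hi
        rw [h0]
        rw [lp_single_zero, map_zero]
    exact (h2 ▸ h1).unique hs
  · -- `(χ_a^b)* χ_a^b` kills vectors supported outside `H_a ⊗ ℓ²(S_a)`
    intro f hf
    have hs : HasSum (fun i : PIdx K => lp.single 2 i (f i)) f :=
      lp.hasSum_single ENNReal.ofNat_ne_top f
    have h1 := hs.mapL (adjoint T ∘L T)
    have h2 : (fun i : PIdx K => (adjoint T ∘L T) (lp.single 2 i (f i))) =
        fun _ : PIdx K => (0 : BigH N) := by
      funext i
      by_cases hi : i.1 = a
      · have h0 := hf i hi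
        rw [h0]
        rw [lp_single_zero, map_zero]
      · have := hTTn i (f i) hi
        simp only [norm, ContinuousLinearMap.comp_apply]
        exact this
    exact (h2 ▸ h1).unique hasSum_zero
  · -- self-adjointness of `χ_a^b (χ_a^b)*`
    refine isSelfAdjoint_iff'.mpr ?_
    rw [adjoint_comp, adjoint_adjoint]
  · -- idempotence of `χ_a^b (χ_a^b)*`
    show (T ∘L adjoint T) * (T ∘L adjoint T) = T ∘L adjoint T
    refine ContinuousLinearMap.ext fun f => ?_
    rw [ContinuousLinearMap.mul_apply]
    have h5 := DFunLike.congr_fun hmid (adjoint T f)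
    simpa using h5
  · -- the range of `χ_a^b (χ_a^b)*` is contained in `H_b ⊗ ℓ²(S_b)`
    intro f i hi
    have e1 := lp.inner_single_left (𝕜 := ℂ) i (((T ∘L adjoint T) f) i) ((T ∘L adjoint T) f)
    have e2 : (inner ℂ (lp.single 2 i (((T ∘L adjoint T) f) i)) ((T ∘L adjoint T) f) : ℂ) = 0 := by
      have hK := K3 i (((T ∘L adjoint T) f) i) hi
      rw [ContinuousLinearMap.comp_apply] at hK ⊢
      rw [← adjoint_inner_left]
      simp only [norm] at hK ⊢
      rw [hK, inner_zero_left]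
    rw [e1] at e2
    exact inner_self_eq_zero.mp e2

end PosetNets
end
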